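/- arXiv:1412.1439 — 4 statements merged into one kernel-verified Lean document; each statement's English description precedes it below -/
import Mathlib

section
/- Let X and Y be Hilbert spaces, C ⊆ X a nonempty closed convex set, ψ† ∈ C, and T, T_h : X → Y bounded linear operators with ‖T − T_h‖ ≤ η_h. Assume the variational source condition holds: there exist β > 0 and a strictly increasing concave function φ : [0,∞) → [0,∞) with φ(0) = 0 such that β‖ψ − ψ†‖² ≤ ‖ψ‖² − ‖ψ†‖² + φ(‖T(ψ − ψ†)‖²) for all ψ ∈ C. Let S^δ ∈ Y satisfy ‖S^δ − Tψ†‖ ≤ δ, let α > η_h², and let ψ_reg ∈ C be a minimizer over C of ψ ↦ ‖T_h ψ − S^δ‖² + α‖ψ‖². Then β‖ψ_reg − ψ†‖² ≤ (6 η_h² ‖ψ†‖² + 4 δ²)/(α − η_h²) + (−φ)*(−1/(4(α − η_h²))), where (−φ)*(s) := sup_{t ≥ 0} (s t + φ(t)) denotes the Fenchel conjugate of −φ. -/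
/-!
Compare the Tikhonov functional at `ψreg` with its value at `ψdag` and feed the result into the
variational source condition at `ψreg`. With `γ = α - ηh²`, the perturbations `‖T - Th‖ ≤ ηh` and
`‖Sδ - T ψdag‖ ≤ δ` give `γ (β ‖ψreg - ψdag‖² - φ t) + t / 4 ≤ 6 ηh² ‖ψdag‖² + 4 δ²` for
`t = ‖T (ψreg - ψdag)‖²`. After dividing by `γ`, the term `-t / (4γ) + φ t` is one of the values
whose supremum is `(-φ)*(-1 / (4γ))`.
-/

section PerturbedOperator

variable {E F : Type*} [NormedAddCommGroup E] [NormedSpace ℝ E]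
  [NormedAddCommGroup F] [NormedSpace ℝ F]
  {T Th : E →L[ℝ] F} {η δ : ℝ} {S : F} {x₀ : E}

theorem norm_apply_sub_apply_le (hT : ‖T - Th‖ ≤ η) (x : E) : ‖T x - Th x‖ ≤ η * ‖x‖ := by
  simpa using (T - Th).le_of_opNorm_le hT x

theorem norm_perturbed_residual_sq_le (hT : ‖T - Th‖ ≤ η) (hS : ‖S - T x₀‖ ≤ δ) :
    ‖Th x₀ - S‖ ^ 2 ≤ 2 * η ^ 2 * ‖x₀‖ ^ 2 + 2 * δ ^ 2 := by
  have h : ‖Th x₀ - S‖ ≤ η * ‖x₀‖ + δ :=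
    calc ‖Th x₀ - S‖ = ‖(S - T x₀) + (T x₀ - Th x₀)‖ := by rw [← norm_neg]; congr 1; abel
      _ ≤ ‖S - T x₀‖ + ‖T x₀ - Th x₀‖ := norm_add_le _ _
      _ ≤ η * ‖x₀‖ + δ := by linarith [norm_apply_sub_apply_le hT x₀]
  nlinarith [norm_nonneg (Th x₀ - S), sq_nonneg (η * ‖x₀‖ - δ)]

theorem norm_apply_sub_sq_le (hT : ‖T - Th‖ ≤ η) (hS : ‖S - T x₀‖ ≤ δ) (x : E) :
    ‖T (x - x₀)‖ ^ 2 ≤ 2 * η ^ 2 * ‖x‖ ^ 2 + 4 * ‖Th x - S‖ ^ 2 + 4 * δ ^ 2 := by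
  have h : ‖T (x - x₀)‖ ≤ η * ‖x‖ + ‖Th x - S‖ + δ :=
    calc ‖T (x - x₀)‖ = ‖(T x - Th x) + (Th x - S) + (S - T x₀)‖ := by rw [map_sub]; abel_nf
      _ ≤ ‖T x - Th x‖ + ‖Th x - S‖ + ‖S - T x₀‖ := norm_add₃_le
      _ ≤ η * ‖x‖ + ‖Th x - S‖ + δ := by linarith [norm_apply_sub_apply_le hT x]
  nlinarith [norm_nonneg (T (x - x₀)), sq_nonneg (η * ‖x‖ - ‖Th x - S‖ - δ),
    sq_nonneg (‖Th x - S‖ - δ)]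

theorem mul_norm_sub_sq_le_of_source_condition {α β : ℝ} {φ : ℝ → ℝ} {x : E}
    (hT : ‖T - Th‖ ≤ η) (hS : ‖S - T x₀‖ ≤ δ) (hα : η ^ 2 < α)
    (hvsc : β * ‖x - x₀‖ ^ 2 ≤ ‖x‖ ^ 2 - ‖x₀‖ ^ 2 + φ (‖T (x - x₀)‖ ^ 2))
    (hmin : ‖Th x - S‖ ^ 2 + α * ‖x‖ ^ 2 ≤ ‖Th x₀ - S‖ ^ 2 + α * ‖x₀‖ ^ 2) :
    β * ‖x - x₀‖ ^ 2 ≤ (6 * η ^ 2 * ‖x₀‖ ^ 2 + 4 * δ ^ 2) / (α - η ^ 2) +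
      (-(1 / (4 * (α - η ^ 2))) * ‖T (x - x₀)‖ ^ 2 + φ (‖T (x - x₀)‖ ^ 2)) := by
  set γ := α - η ^ 2
  set t := ‖T (x - x₀)‖ ^ 2
  have hγ : 0 < γ := sub_pos.mpr hα
  have hsplit : (6 * η ^ 2 * ‖x₀‖ ^ 2 + 4 * δ ^ 2) / γ + (-(1 / (4 * γ)) * t + φ t) =
      (6 * η ^ 2 * ‖x₀‖ ^ 2 + 4 * δ ^ 2 - t / 4) / γ + φ t := by
    field_simp
    ring
  rw [hsplit, ← sub_le_iff_le_add, le_div_iff₀ hγ]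
  have hgap : γ * (β * ‖x - x₀‖ ^ 2 - φ t) ≤ γ * (‖x‖ ^ 2 - ‖x₀‖ ^ 2) :=
    mul_le_mul_of_nonneg_left (by linarith) hγ.le
  linarith [norm_perturbed_residual_sq_le hT hS, norm_apply_sub_sq_le hT hS x,
    mul_nonneg (sq_nonneg η) (sq_nonneg ‖x₀‖), mul_nonneg (sq_nonneg η) (sq_nonneg ‖x‖),
    sq_nonneg δ]

end PerturbedOperator

theorem stmt_0_general
    {X Y : Type*} [NormedAddCommGroup X] [InnerProductSpace ℝ X]
    [NormedAddCommGroup Y] [InnerProductSpace ℝ Y]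
    (C : Set X)
    (ψdag : X) (hψdag : ψdag ∈ C)
    (T Th : X →L[ℝ] Y) (ηh : ℝ) (hTTh : ‖T - Th‖ ≤ ηh)
    (β : ℝ)
    (φ : ℝ → ℝ)
    (hvsc : ∀ ψ ∈ C, β * ‖ψ - ψdag‖ ^ 2 ≤ ‖ψ‖ ^ 2 - ‖ψdag‖ ^ 2 + φ (‖T (ψ - ψdag)‖ ^ 2))
    (δ : ℝ) (Sδ : Y) (hδ : ‖Sδ - T ψdag‖ ≤ δ)
    (α : ℝ) (hα : ηh ^ 2 < α)
    (ψreg : X) (hψreg : ψreg ∈ C)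
    (hmin : ∀ ψ ∈ C,
      ‖Th ψreg - Sδ‖ ^ 2 + α * ‖ψreg‖ ^ 2 ≤ ‖Th ψ - Sδ‖ ^ 2 + α * ‖ψ‖ ^ 2) :
    (↑(β * ‖ψreg - ψdag‖ ^ 2) : EReal) ≤
      (((6 * ηh ^ 2 * ‖ψdag‖ ^ 2 + 4 * δ ^ 2) / (α - ηh ^ 2) : ℝ) : EReal) +
        ⨆ t : {t : ℝ // 0 ≤ t},
          (((-(1 / (4 * (α - ηh ^ 2))) * (t : ℝ) + φ t : ℝ)) : EReal) := by
  set t := ‖T (ψreg - ψdag)‖ ^ 2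
  have key : β * ‖ψreg - ψdag‖ ^ 2 ≤ (6 * ηh ^ 2 * ‖ψdag‖ ^ 2 + 4 * δ ^ 2) / (α - ηh ^ 2) +
      (-(1 / (4 * (α - ηh ^ 2))) * t + φ t) :=
    mul_norm_sub_sq_le_of_source_condition hTTh hδ hα (hvsc ψreg hψreg) (hmin ψdag hψdag)
  calc (↑(β * ‖ψreg - ψdag‖ ^ 2) : EReal)
      ≤ (((6 * ηh ^ 2 * ‖ψdag‖ ^ 2 + 4 * δ ^ 2) / (α - ηh ^ 2) : ℝ) : EReal) +
          ((-(1 / (4 * (α - ηh ^ 2))) * t + φ t : ℝ) : EReal) := by exact_mod_cast key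
    _ ≤ _ := by
      gcongr
      exact le_iSup (fun s : {s : ℝ // 0 ≤ s} =>
        ((-(1 / (4 * (α - ηh ^ 2))) * (s : ℝ) + φ s : ℝ) : EReal)) ⟨t, sq_nonneg _⟩

/-- Convergence estimate for constrained Tikhonov regularization with approximate
operator under a variational source condition (Theorem 3.1 variant). -/
theorem stmt_0
    {X Y : Type*} [NormedAddCommGroup X] [InnerProductSpace ℝ X] [CompleteSpace X]
    [NormedAddCommGroup Y] [InnerProductSpace ℝ Y] [CompleteSpace Y]
    (C : Set X) (hC_ne : C.Nonempty) (hC_closed : IsClosed C) (hC_conv : Convex ℝ C)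
    (ψdag : X) (hψdag : ψdag ∈ C)
    (T Th : X →L[ℝ] Y) (ηh : ℝ) (hTTh : ‖T - Th‖ ≤ ηh)
    (β : ℝ) (hβ : 0 < β)
    (φ : ℝ → ℝ) (hφ_mono : StrictMonoOn φ (Set.Ici 0))
    (hφ_conc : ConcaveOn ℝ (Set.Ici 0) φ) (hφ0 : φ 0 = 0)
    (hφ_nonneg : ∀ t ≥ 0, 0 ≤ φ t)
    (hvsc : ∀ ψ ∈ C, β * ‖ψ - ψdag‖ ^ 2 ≤ ‖ψ‖ ^ 2 - ‖ψdag‖ ^ 2 + φ (‖T (ψ - ψdag)‖ ^ 2))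
    (δ : ℝ) (Sδ : Y) (hδ : ‖Sδ - T ψdag‖ ≤ δ)
    (α : ℝ) (hα : ηh ^ 2 < α)
    (ψreg : X) (hψreg : ψreg ∈ C)
    (hmin : ∀ ψ ∈ C,
      ‖Th ψreg - Sδ‖ ^ 2 + α * ‖ψreg‖ ^ 2 ≤ ‖Th ψ - Sδ‖ ^ 2 + α * ‖ψ‖ ^ 2) :
    (↑(β * ‖ψreg - ψdag‖ ^ 2) : EReal) ≤
      (((6 * ηh ^ 2 * ‖ψdag‖ ^ 2 + 4 * δ ^ 2) / (α - ηh ^ 2) : ℝ) : EReal) +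
        ⨆ t : {t : ℝ // 0 ≤ t},
          (((-(1 / (4 * (α - ηh ^ 2))) * (t : ℝ) + φ t : ℝ)) : EReal) :=
  stmt_0_general C ψdag hψdag T Th ηh hTTh β φ hvsc δ Sδ hδ α hα ψreg hψreg hmin
end

section
/- Let X and Y be Hilbert spaces, T : X → Y a compact linear operator, and for each n ∈ ℕ let P_n be an orthogonal projection on X and Q_n an orthogonal projection on Y. Set T_n := Q_n T P_n. Then ‖T − T_n‖ → 0 as n → ∞ if and only if P_n x → x for every x in the range of the adjoint T* and Q_n y → y for every y in the range of T. -/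
/-!
If `‖T - Qₙ T Pₙ‖ → 0`, then `(1 - Qₙ) T = (1 - Qₙ)(T - Qₙ T Pₙ)` and, taking adjoints,
`(1 - Pₙ) T* = (1 - Pₙ)(T - Qₙ T Pₙ)*`, so both tend to `0` in norm, hence pointwise.

Conversely `T - Qₙ T Pₙ = (1 - Qₙ) T + Qₙ T (1 - Pₙ)`. The operators `1 - Qₙ` are uniformly
bounded, hence equicontinuous, so by Ascoli their pointwise convergence on `range T` is uniform
on the compact closure of the image of the unit ball: `‖(1 - Qₙ) T‖ → 0`. For the second term
the C⋆-identity gives `‖T (1 - Pₙ)‖² ≤ ‖(1 - Pₙ) T* T‖`, and `T* T` is compact with range inside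
`range T*`, so the same argument applies without needing compactness of `T*`.
-/

open Filter Topology ContinuousLinearMap
open scoped InnerProduct

theorem IsCompact.tendstoUniformlyOn_of_equicontinuousOn {ι X α : Type*}
    [TopologicalSpace X] [UniformSpace α] {F : ι → X → α} {f : X → α} {l : Filter ι}
    {B : Set X} (hB : IsCompact B) (hF : EquicontinuousOn F B)
    (h : ∀ x ∈ B, Tendsto (F · x) l (𝓝 (f x))) :
    TendstoUniformlyOn F f l B := by
  have : CompactSpace B := isCompact_iff_compactSpace.mp hB
  rw [tendstoUniformlyOn_iff_tendstoUniformly_comp_coe]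
  refine UniformFun.tendsto_iff_tendstoUniformly.mp ?_
  exact ((equicontinuous_restrict_iff F).mpr hF).tendsto_uniformFun_iff_pi l (f ∘ Subtype.val)
    |>.mpr (tendsto_pi_nhds.mpr fun x => h x x.2)

section Normed

variable {𝕜 E F G ι : Type*} [RCLike 𝕜] [SeminormedAddCommGroup E] [NormedSpace 𝕜 E]
  [NormedAddCommGroup F] [NormedSpace 𝕜 F] [NormedAddCommGroup G] [NormedSpace 𝕜 G]
  {l : Filter ι}

theorem tendsto_apply_of_tendsto_norm_comp {K : E →L[𝕜] F} {S : ι → F →L[𝕜] G}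
    (h : Tendsto (fun i => ‖S i ∘L K‖) l (𝓝 0)) {y : F} (hy : y ∈ Set.range K) :
    Tendsto (fun i => S i y) l (𝓝 0) := by
  obtain ⟨x, rfl⟩ := hy
  refine squeeze_zero_norm (fun i => (S i ∘L K).le_opNorm x) ?_
  simpa using h.mul_const ‖x‖

theorem IsCompactOperator.tendsto_norm_comp_of_tendsto_apply {K : E →L[𝕜] F}
    (hK : IsCompactOperator K) {S : ι → F →L[𝕜] G} {C : ℝ} (hS : ∀ i, ‖S i‖ ≤ C)
    (h : ∀ y ∈ Set.range K, Tendsto (fun i => S i y) l (𝓝 0)) :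
    Tendsto (fun i => ‖S i ∘L K‖) l (𝓝 0) := by
  set B := closure (K '' Metric.closedBall 0 1)
  have hS_equicont : Equicontinuous fun i => (S i : F → G) :=
    ((NormedSpace.equicontinuous_TFAE S).out 5 1).mp (⟨C, hS⟩ : ∃ C, ∀ i, ‖S i‖ ≤ C)
  have h_tendsto_B : ∀ y ∈ B, Tendsto (fun i => S i y) l (𝓝 0) :=
    closure_minimal (by rintro _ ⟨x, -, rfl⟩; exact h _ ⟨x, rfl⟩)
      (hS_equicont.isClosed_setOfPred_tendsto (f := 0) continuous_const)
  have h_unif := (hK.isCompact_closure_image_closedBall 1).tendstoUniformlyOn_of_equicontinuousOn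
    (hS_equicont.equicontinuousOn _) h_tendsto_B
  rw [Metric.tendstoUniformlyOn_iff] at h_unif
  rw [NormedAddGroup.tendsto_nhds_zero]
  intro ε hε
  filter_upwards [h_unif (ε / 2) (half_pos hε)] with i hi
  have : ‖S i ∘L K‖ ≤ ε / 2 := by
    refine opNorm_le_of_unit_norm (half_pos hε).le fun x hx => ?_
    have := hi (K x) (subset_closure ⟨x, by simp [hx], rfl⟩)
    rw [dist_zero_left] at this
    exact this.le
  rw [norm_norm]
  linarith

theorem tendsto_one_sub_apply_nhds_zero_iff {S : ι → F →L[𝕜] F} {x : F} :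
    Tendsto (fun i => (1 - S i) x) l (𝓝 0) ↔ Tendsto (fun i => S i x) l (𝓝 x) := by
  rw [← tendsto_const_sub_iff x]
  simp only [sub_apply, one_apply_eq_self, sub_sub_cancel, sub_zero]

end Normed

section Hilbert

variable {𝕜 E F : Type*} [RCLike 𝕜]
  [NormedAddCommGroup E] [InnerProductSpace 𝕜 E] [NormedAddCommGroup F] [InnerProductSpace 𝕜 F]

theorem adjoint_sub_comp_comp [CompleteSpace E] [CompleteSpace F] (A : E →L[𝕜] F)
    {p : E →L[𝕜] E} {q : F →L[𝕜] F} (hp : IsSelfAdjoint p) (hq : IsSelfAdjoint q) :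
    (A - q ∘L A ∘L p)† = A† - p ∘L A† ∘L q := by
  rw [map_sub, adjoint_comp, adjoint_comp, hp.adjoint_eq, hq.adjoint_eq, comp_assoc]

theorem norm_one_sub_comp_le_norm_sub_comp_comp [CompleteSpace F] (A : E →L[𝕜] F)
    {q : F →L[𝕜] F} (hq : IsStarProjection q) (p : E →L[𝕜] E) :
    ‖(1 - q) ∘L A‖ ≤ ‖A - q ∘L A ∘L p‖ := by
  have h : (1 - q) ∘L A = (1 - q) ∘L (A - q ∘L A ∘L p) := by
    rw [comp_sub, ← comp_assoc, ← comp_assoc, ← mul_def, hq.one_sub_mul_self, zero_comp,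
      zero_comp, sub_zero]
  calc ‖(1 - q) ∘L A‖ = ‖(1 - q) ∘L (A - q ∘L A ∘L p)‖ := by rw [← h]
    _ ≤ ‖1 - q‖ * ‖A - q ∘L A ∘L p‖ := opNorm_comp_le _ _
    _ ≤ ‖A - q ∘L A ∘L p‖ := mul_le_of_le_one_left (norm_nonneg _) hq.one_sub.norm_le

theorem norm_sub_comp_comp_le_add [CompleteSpace F] (A : E →L[𝕜] F) {q : F →L[𝕜] F}
    (hq : IsStarProjection q) (p : E →L[𝕜] E) :
    ‖A - q ∘L A ∘L p‖ ≤ ‖(1 - q) ∘L A‖ + ‖A ∘L (1 - p)‖ := by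
  have h : A - q ∘L A ∘L p = (1 - q) ∘L A + q ∘L (A ∘L (1 - p)) := by
    ext x
    simp only [sub_apply, comp_apply, add_apply, one_apply_eq_self, map_sub, sub_add_sub_cancel]
  calc ‖A - q ∘L A ∘L p‖ ≤ ‖(1 - q) ∘L A‖ + ‖q ∘L (A ∘L (1 - p))‖ := h ▸ norm_add_le _ _
    _ ≤ ‖(1 - q) ∘L A‖ + ‖A ∘L (1 - p)‖ := by
      gcongr
      exact (opNorm_comp_le _ _).trans (mul_le_of_le_one_left (norm_nonneg _) hq.norm_le)

theorem sq_norm_comp_one_sub_le [CompleteSpace E] [CompleteSpace F] (A : E →L[𝕜] F)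
    {p : E →L[𝕜] E} (hp : IsStarProjection p) :
    ‖A ∘L (1 - p)‖ ^ 2 ≤ ‖(1 - p) ∘L (A† ∘L A)‖ :=
  calc ‖A ∘L (1 - p)‖ ^ 2 = ‖((1 - p) ∘L (A† ∘L A)) ∘L (1 - p)‖ := by
        rw [sq, ← norm_adjoint_comp_self, adjoint_comp, hp.one_sub.isSelfAdjoint.adjoint_eq]
        simp only [comp_assoc]
    _ ≤ ‖(1 - p) ∘L (A† ∘L A)‖ * ‖1 - p‖ := opNorm_comp_le _ _
    _ ≤ ‖(1 - p) ∘L (A† ∘L A)‖ := mul_le_of_le_one_right (norm_nonneg _) hp.one_sub.norm_le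

end Hilbert

/-- For a compact operator `T` and orthogonal projections `P_n`, `Q_n`,
`‖T − Q_n T P_n‖ → 0` iff `P_n → 1` pointwise on `range T*` and `Q_n → 1`
pointwise on `range T`. -/
theorem stmt_2
    {X Y : Type*} [NormedAddCommGroup X] [InnerProductSpace ℝ X] [CompleteSpace X]
    [NormedAddCommGroup Y] [InnerProductSpace ℝ Y] [CompleteSpace Y]
    (T : X →L[ℝ] Y) (hT : IsCompactOperator (T : X → Y))
    (P : ℕ → X →L[ℝ] X) (Q : ℕ → Y →L[ℝ] Y)
    (hP_idem : ∀ n, IsIdempotentElem (P n)) (hP_sa : ∀ n, IsSelfAdjoint (P n))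
    (hQ_idem : ∀ n, IsIdempotentElem (Q n)) (hQ_sa : ∀ n, IsSelfAdjoint (Q n)) :
    Tendsto (fun n => ‖T - (Q n).comp (T.comp (P n))‖) atTop (𝓝 0) ↔
      ((∀ x ∈ Set.range (ContinuousLinearMap.adjoint T), Tendsto (fun n => P n x) atTop (𝓝 x)) ∧
        (∀ y ∈ Set.range T, Tendsto (fun n => Q n y) atTop (𝓝 y))) := by
  have hP (n : ℕ) : IsStarProjection (P n) := ⟨hP_idem n, hP_sa n⟩
  have hQ (n : ℕ) : IsStarProjection (Q n) := ⟨hQ_idem n, hQ_sa n⟩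
  constructor
  · intro h
    have hPT : Tendsto (fun n => ‖(1 - P n) ∘L T†‖) atTop (𝓝 0) := by
      refine squeeze_zero (fun _ => norm_nonneg _) (fun n => ?_) h
      rw [← LinearIsometryEquiv.norm_map adjoint (T - _),
        adjoint_sub_comp_comp T (hP_sa n) (hQ_sa n)]
      exact norm_one_sub_comp_le_norm_sub_comp_comp (T†) (hP n) (Q n)
    have hQT : Tendsto (fun n => ‖(1 - Q n) ∘L T‖) atTop (𝓝 0) :=
      squeeze_zero (fun _ => norm_nonneg _)
        (fun n => norm_one_sub_comp_le_norm_sub_comp_comp T (hQ n) (P n)) h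
    exact ⟨fun x hx => tendsto_one_sub_apply_nhds_zero_iff.mp
        (tendsto_apply_of_tendsto_norm_comp hPT hx),
      fun y hy => tendsto_one_sub_apply_nhds_zero_iff.mp
        (tendsto_apply_of_tendsto_norm_comp hQT hy)⟩
  · rintro ⟨hP_tendsto, hQ_tendsto⟩
    have hQT : Tendsto (fun n => ‖(1 - Q n) ∘L T‖) atTop (𝓝 0) :=
      hT.tendsto_norm_comp_of_tendsto_apply (fun n => (hQ n).one_sub.norm_le) fun y hy =>
        tendsto_one_sub_apply_nhds_zero_iff.mpr (hQ_tendsto y hy)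
    have hPTT : Tendsto (fun n => ‖(1 - P n) ∘L (T† ∘L T)‖) atTop (𝓝 0) :=
      (hT.clm_comp (T†)).tendsto_norm_comp_of_tendsto_apply (fun n => (hP n).one_sub.norm_le)
        fun x hx => tendsto_one_sub_apply_nhds_zero_iff.mpr
          (hP_tendsto x (Set.range_comp_subset_range _ _ hx))
    have hTP : Tendsto (fun n => ‖T ∘L (1 - P n)‖) atTop (𝓝 0) :=
      squeeze_zero (fun _ => norm_nonneg _)
        (fun n => Real.le_sqrt_of_sq_le (sq_norm_comp_one_sub_le T (hP n)))
        (by simpa using hPTT.sqrt)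
    exact squeeze_zero (fun _ => norm_nonneg _)
      (fun n => norm_sub_comp_comp_le_add T (hQ n) (P n)) (by simpa using hQT.add hTP)
end

section
/- Let X and Y be Hilbert spaces, C ⊆ X a nonempty closed convex set, ψ† ∈ C, and T : X → Y a bounded linear operator satisfying the variational source condition with constant β > 0 and a strictly increasing concave function φ : [0,∞) → [0,∞) with φ(0) = 0. Let (T_n) be bounded linear operators X → Y with ‖T − T_n‖ ≤ η_n, data S_n ∈ Y with ‖S_n − Tψ†‖ ≤ δ_n, and parameters α_n with α_n > η_n². Assume δ_n → 0, η_n → 0, α_n → 0 and (δ_n² + η_n²)/(α_n − η_n²) → 0 as n → ∞. If ψ_n ∈ C minimizes ψ ↦ ‖T_n ψ − S_n‖² + α_n‖ψ‖² over C, then ‖ψ_n − ψ†‖ → 0 as n → ∞. -/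
open Filter Topology

/-!
Testing the minimality of `ψₙ` against `ψ†` gives `‖ψₙ‖² ≤ ‖ψ†‖² + sₙ` with
`sₙ = (ηₙ ‖ψ†‖ + δₙ)² / αₙ → 0` and a vanishing residual, hence `T ψₙ → T ψ†`.
Closed balls of a Hilbert space are weakly compact (Banach–Alaoglu transported by the Riesz
map), so along any ultrafilter `ψₙ` has a weak limit `x`. It lies in `C`, since closed convex sets
are weakly closed, and satisfies `T x = T ψ†` and `‖x‖ ≤ ‖ψ†‖`; the source condition at `x`, where
`φ` only contributes `φ 0 = 0`, then forces `x = ψ†`. Weak convergence to `ψ†` together with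
`limsup ‖ψₙ‖ ≤ ‖ψ†‖` is strong convergence.
-/

open scoped RealInnerProductSpace

theorem tendsto_zero_of_sq_le {ι : Type*} {l : Filter ι} {u v : ι → ℝ} (hu : ∀ i, 0 ≤ u i)
    (huv : ∀ᶠ i in l, u i ^ 2 ≤ v i) (hv : Tendsto v l (𝓝 0)) : Tendsto u l (𝓝 0) := by
  refine squeeze_zero' (Eventually.of_forall hu) (huv.mono fun i hi => ?_) (by simpa using hv.sqrt)
  exact Real.le_sqrt_of_sq_le hi

theorem tendsto_sq_div_of_tendsto_div_sub {ι : Type*} {l : Filter ι} {δ η α : ι → ℝ} (c : ℝ)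
    (hα : ∀ i, η i ^ 2 < α i)
    (h : Tendsto (fun i => (δ i ^ 2 + η i ^ 2) / (α i - η i ^ 2)) l (𝓝 0)) :
    Tendsto (fun i => (η i * c + δ i) ^ 2 / α i) l (𝓝 0) := by
  have hα₀ i : 0 < α i := (sq_nonneg _).trans_lt (hα i)
  -- `(η c + δ)² ≤ 2 (c² + 1) (δ² + η²)` and `α - η² ≤ α`
  refine squeeze_zero (fun i => div_nonneg (sq_nonneg _) (hα₀ i).le) (fun i => ?_)
    (by simpa using h.const_mul (2 * (c ^ 2 + 1)))
  rw [← mul_div_assoc]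
  refine div_le_div₀ (by positivity) ?_ (sub_pos.2 (hα i)) (by nlinarith [sq_nonneg (η i)])
  nlinarith [sq_nonneg (η i * c - δ i), sq_nonneg (η i), sq_nonneg (δ i * c)]

section HilbertSpace

variable {X : Type*} [NormedAddCommGroup X] [InnerProductSpace ℝ X]

section WeakTopology

variable {ι : Type*} {l : Filter ι} {f : ι → X} {x : X}

theorem isCompact_toWeakSpace_closedBall [CompleteSpace X] (r : ℝ) :
    IsCompact (toWeakSpace ℝ X '' Metric.closedBall 0 r) := by
  let Φ : WeakDual ℝ X → WeakSpace ℝ X := fun ℓ =>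
    toWeakSpace ℝ X ((InnerProductSpace.toDual ℝ X).symm (WeakDual.toStrongDual ℓ))
  have hΦ : Continuous Φ := WeakBilin.continuous_of_continuous_eval _ fun m => by
    convert WeakDual.eval_continuous ((InnerProductSpace.toDual ℝ X).symm m) using 2 with ℓ
    show m ((InnerProductSpace.toDual ℝ X).symm (WeakDual.toStrongDual ℓ)) =
      WeakDual.toStrongDual ℓ ((InnerProductSpace.toDual ℝ X).symm m)
    rw [← InnerProductSpace.toDual_symm_apply, ← InnerProductSpace.toDual_symm_apply,
      real_inner_comm]
  convert (WeakDual.isCompact_closedBall (𝕜 := ℝ) (0 : StrongDual ℝ X) r).image hΦ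
  ext w
  constructor
  · rintro ⟨x, hx, rfl⟩
    refine ⟨StrongDual.toWeakDual (InnerProductSpace.toDual ℝ X x), by simpa using hx, by simp [Φ]⟩
  · rintro ⟨ℓ, hℓ, rfl⟩
    exact ⟨_, by simpa using hℓ, rfl⟩

theorem exists_tendsto_toWeakSpace_of_eventually_norm_le [CompleteSpace X] (U : Ultrafilter ι)
    {r : ℝ} (hf : ∀ᶠ i in U, ‖f i‖ ≤ r) :
    ∃ x, Tendsto (fun i => toWeakSpace ℝ X (f i)) U (𝓝 (toWeakSpace ℝ X x)) := by
  have hU : ↑(U.map fun i => toWeakSpace ℝ X (f i)) ≤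
      𝓟 (toWeakSpace ℝ X '' Metric.closedBall 0 r) :=
    le_principal_iff.2 <| hf.mono fun i hi => ⟨f i, mem_closedBall_zero_iff.2 hi, rfl⟩
  obtain ⟨w, -, hw⟩ := (isCompact_toWeakSpace_closedBall r).ultrafilter_le_nhds _ hU
  exact ⟨(toWeakSpace ℝ X).symm w, hw⟩

theorem mem_of_tendsto_toWeakSpace {C : Set X} (hCc : IsClosed C) (hCv : Convex ℝ C) [l.NeBot]
    (hfC : ∀ᶠ i in l, f i ∈ C)
    (hx : Tendsto (fun i => toWeakSpace ℝ X (f i)) l (𝓝 (toWeakSpace ℝ X x))) : x ∈ C := by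
  have : toWeakSpace ℝ X x ∈ toWeakSpace ℝ X '' C := by
    rw [← hCc.closure_eq, hCv.toWeakSpace_closure ℝ]
    exact mem_closure_of_tendsto hx (hfC.mono fun i hi => Set.mem_image_of_mem _ hi)
  simpa using this

theorem tendsto_inner_of_tendsto_toWeakSpace
    (hx : Tendsto (fun i => toWeakSpace ℝ X (f i)) l (𝓝 (toWeakSpace ℝ X x))) (y : X) :
    Tendsto (fun i => ⟪f i, y⟫) l (𝓝 ⟪x, y⟫) := by
  have : Tendsto (fun i => ⟪y, f i⟫) l (𝓝 ⟪y, x⟫) :=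
    ((WeakBilin.eval_continuous _ (innerSL ℝ y)).tendsto _).comp hx
  simpa only [real_inner_comm y] using this

theorem norm_sq_le_of_tendsto_toWeakSpace [l.NeBot] {g : ι → ℝ} {r : ℝ}
    (hx : Tendsto (fun i => toWeakSpace ℝ X (f i)) l (𝓝 (toWeakSpace ℝ X x)))
    (hf : ∀ᶠ i in l, ‖f i‖ ^ 2 ≤ g i) (hg : Tendsto g l (𝓝 r)) : ‖x‖ ^ 2 ≤ r := by
  have hlim : Tendsto (fun i => 2 * ⟪f i, x⟫ - ‖x‖ ^ 2) l (𝓝 (‖x‖ ^ 2)) := by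
    convert ((tendsto_inner_of_tendsto_toWeakSpace hx x).const_mul 2).sub_const (‖x‖ ^ 2) using 2
    rw [real_inner_self_eq_norm_sq]; ring
  refine le_of_tendsto_of_tendsto hlim hg (hf.mono fun i hi => ?_)
  nlinarith [real_inner_le_norm (f i) x, sq_nonneg (‖f i‖ - ‖x‖)]

theorem tendsto_of_tendsto_toWeakSpace_of_norm_sq_le {g : ι → ℝ}
    (hx : Tendsto (fun i => toWeakSpace ℝ X (f i)) l (𝓝 (toWeakSpace ℝ X x)))
    (hf : ∀ᶠ i in l, ‖f i‖ ^ 2 ≤ g i) (hg : Tendsto g l (𝓝 (‖x‖ ^ 2))) : Tendsto f l (𝓝 x) := by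
  have hlim : Tendsto (fun i => g i - 2 * ⟪f i, x⟫ + ‖x‖ ^ 2) l (𝓝 0) := by
    convert (hg.sub ((tendsto_inner_of_tendsto_toWeakSpace hx x).const_mul 2)).add_const
      (‖x‖ ^ 2) using 2
    rw [real_inner_self_eq_norm_sq]; ring
  refine tendsto_iff_norm_sub_tendsto_zero.2 <| tendsto_zero_of_sq_le (fun i => norm_nonneg _)
    (hf.mono fun i hi => ?_) hlim
  rw [norm_sub_sq_real]
  linarith

end WeakTopology

theorem tendsto_of_tendsto_apply_of_norm_sq_le [CompleteSpace X]
    {Y : Type*} [NormedAddCommGroup Y] [NormedSpace ℝ Y] {C : Set X} (hCc : IsClosed C)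
    (hCv : Convex ℝ C) (T : X →L[ℝ] Y) {a : X} (ha : ∀ x ∈ C, T x = T a → ‖x‖ ≤ ‖a‖ → x = a)
    {ι : Type*} {l : Filter ι} {f : ι → X} {g : ι → ℝ} (hfC : ∀ᶠ i in l, f i ∈ C)
    (hTf : Tendsto (fun i => T (f i)) l (𝓝 (T a))) (hf : ∀ᶠ i in l, ‖f i‖ ^ 2 ≤ g i)
    (hg : Tendsto g l (𝓝 (‖a‖ ^ 2))) : Tendsto f l (𝓝 a) := by
  refine (tendsto_iff_ultrafilter _ _ _).2 fun U hU => ?_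
  have hfU := hf.filter_mono hU
  have hgU := hg.mono_left hU
  have hbdd : ∀ᶠ i in U, ‖f i‖ ≤ ‖a‖ + 1 := by
    have ha1 : ‖a‖ ^ 2 < (‖a‖ + 1) ^ 2 := by nlinarith [norm_nonneg a]
    filter_upwards [hfU, hgU.eventually_lt_const ha1] with i hfi hgi
    nlinarith [norm_nonneg (f i), norm_nonneg a]
  obtain ⟨x, hx⟩ := exists_tendsto_toWeakSpace_of_eventually_norm_le U hbdd
  have hxC : x ∈ C := mem_of_tendsto_toWeakSpace hCc hCv (hfC.filter_mono hU) hx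
  have hTx : T x = T a := by
    have hweak : Tendsto (fun i => toWeakSpace ℝ Y (T (f i))) U (𝓝 (toWeakSpace ℝ Y (T x))) :=
      ((WeakSpace.map T).continuous.tendsto _).comp hx
    have hstrong : Tendsto (fun i => toWeakSpace ℝ Y (T (f i))) U (𝓝 (toWeakSpace ℝ Y (T a))) :=
      ((toWeakSpaceCLM ℝ Y).continuous.tendsto _).comp (hTf.mono_left hU)
    exact (toWeakSpace ℝ Y).injective (tendsto_nhds_unique hweak hstrong)
  have hxa : ‖x‖ ≤ ‖a‖ :=
    pow_le_pow_iff_left₀ (norm_nonneg _) (norm_nonneg _) two_ne_zero |>.1 <|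
      norm_sq_le_of_tendsto_toWeakSpace hx hfU hgU
  obtain rfl := ha x hxC hTx hxa
  exact tendsto_of_tendsto_toWeakSpace_of_norm_sq_le hx hfU hgU

end HilbertSpace

def VariationalSourceCondition {E F : Type*} [SeminormedAddCommGroup E] [Norm F] (C : Set E)
    (T : E → F) (a : E) (β : ℝ) (φ : ℝ → ℝ) : Prop :=
  ∀ ψ ∈ C, β * ‖ψ - a‖ ^ 2 ≤ ‖ψ‖ ^ 2 - ‖a‖ ^ 2 + φ (‖T (ψ - a)‖ ^ 2)

theorem VariationalSourceCondition.eq_of_apply_eq_of_norm_le {E F 𝓕 : Type*}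
    [NormedAddCommGroup E] [SeminormedAddCommGroup F] [FunLike 𝓕 E F] [AddMonoidHomClass 𝓕 E F]
    {C : Set E} {T : 𝓕} {a : E} {β : ℝ} {φ : ℝ → ℝ} (hvsc : VariationalSourceCondition C T a β φ)
    (hβ : 0 < β) (hφ0 : φ 0 = 0) {x : E} (hx : x ∈ C) (hTx : T x = T a) (hxa : ‖x‖ ≤ ‖a‖) :
    x = a := by
  have hv := hvsc x hx
  rw [map_sub, hTx, sub_self, norm_zero, zero_pow two_ne_zero, hφ0, add_zero] at hv
  have : ‖x - a‖ ^ 2 ≤ 0 := by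
    nlinarith [pow_le_pow_left₀ (norm_nonneg x) hxa 2, sq_nonneg ‖x - a‖]
  simpa [sub_eq_zero] using this

section ApproximateData

variable {𝕜 E F : Type*} [NontriviallyNormedField 𝕜] [SeminormedAddCommGroup E]
  [SeminormedAddCommGroup F] [NormedSpace 𝕜 E] [NormedSpace 𝕜 F] {T K : E →L[𝕜] F} {S : F}
  {η δ : ℝ}

theorem norm_apply_sub_le_of_opNorm_sub_le (hK : ‖T - K‖ ≤ η) {x : E} (hS : ‖S - T x‖ ≤ δ) :
    ‖K x - S‖ ≤ η * ‖x‖ + δ := calc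
  ‖K x - S‖ = ‖(T x - S) - (T - K) x‖ := by congr 1; simp only [sub_apply]; abel
  _ ≤ ‖T x - S‖ + ‖(T - K) x‖ := norm_sub_le _ _
  _ ≤ η * ‖x‖ + δ := by linarith [(T - K).le_of_opNorm_le hK x, norm_sub_rev (T x) S]

theorem norm_apply_sub_apply_le_of_opNorm_sub_le (hK : ‖T - K‖ ≤ η) {x₀ : E} (hS : ‖S - T x₀‖ ≤ δ)
    (x : E) : ‖T x - T x₀‖ ≤ η * ‖x‖ + ‖K x - S‖ + δ := calc
  ‖T x - T x₀‖ = ‖(T - K) x + (K x - S) + (S - T x₀)‖ := by congr 1; simp only [sub_apply]; abel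
  _ ≤ ‖(T - K) x‖ + ‖K x - S‖ + ‖S - T x₀‖ := norm_add₃_le
  _ ≤ η * ‖x‖ + ‖K x - S‖ + δ := by gcongr; exact (T - K).le_of_opNorm_le hK x

variable {x x' : E} {α r : ℝ}

theorem norm_apply_sub_sq_le_of_tikhonov_le (hα : 0 ≤ α)
    (hmin : ‖K x - S‖ ^ 2 + α * ‖x‖ ^ 2 ≤ ‖K x' - S‖ ^ 2 + α * ‖x'‖ ^ 2)
    (hr : ‖K x' - S‖ ≤ r) : ‖K x - S‖ ^ 2 ≤ r ^ 2 + α * ‖x'‖ ^ 2 := by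
  nlinarith [pow_le_pow_left₀ (norm_nonneg _) hr 2, mul_nonneg hα (sq_nonneg ‖x‖)]

theorem norm_sq_le_of_tikhonov_le (hα : 0 < α)
    (hmin : ‖K x - S‖ ^ 2 + α * ‖x‖ ^ 2 ≤ ‖K x' - S‖ ^ 2 + α * ‖x'‖ ^ 2)
    (hr : ‖K x' - S‖ ≤ r) : ‖x‖ ^ 2 ≤ ‖x'‖ ^ 2 + r ^ 2 / α := by
  refine le_of_mul_le_mul_left ?_ hα
  rw [mul_add, mul_div_cancel₀ _ hα.ne']
  nlinarith [pow_le_pow_left₀ (norm_nonneg _) hr 2, sq_nonneg ‖K x - S‖]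

end ApproximateData

theorem stmt_3_general
    {X Y : Type*} [NormedAddCommGroup X] [InnerProductSpace ℝ X] [CompleteSpace X]
    [NormedAddCommGroup Y] [InnerProductSpace ℝ Y]
    (C : Set X) (hC_closed : IsClosed C) (hC_conv : Convex ℝ C)
    (ψdag : X) (hψdag : ψdag ∈ C)
    (T : X →L[ℝ] Y)
    (β : ℝ) (hβ : 0 < β)
    (φ : ℝ → ℝ) (hφ0 : φ 0 = 0)
    (hvsc : ∀ ψ ∈ C, β * ‖ψ - ψdag‖ ^ 2 ≤ ‖ψ‖ ^ 2 - ‖ψdag‖ ^ 2 + φ (‖T (ψ - ψdag)‖ ^ 2))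
    (Tn : ℕ → X →L[ℝ] Y) (ηn : ℕ → ℝ) (hTn : ∀ n, ‖T - Tn n‖ ≤ ηn n)
    (Sn : ℕ → Y) (δn : ℕ → ℝ) (hSn : ∀ n, ‖Sn n - T ψdag‖ ≤ δn n)
    (αn : ℕ → ℝ) (hαn : ∀ n, (ηn n) ^ 2 < αn n)
    (hδ0 : Tendsto δn atTop (𝓝 0)) (hη0 : Tendsto ηn atTop (𝓝 0))
    (hα0 : Tendsto αn atTop (𝓝 0))
    (hrate : Tendsto (fun n => ((δn n) ^ 2 + (ηn n) ^ 2) / (αn n - (ηn n) ^ 2)) atTop (𝓝 0))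
    (ψn : ℕ → X) (hψn_mem : ∀ n, ψn n ∈ C)
    (hψn_min : ∀ n, ∀ ψ ∈ C,
      ‖Tn n (ψn n) - Sn n‖ ^ 2 + αn n * ‖ψn n‖ ^ 2 ≤
        ‖Tn n ψ - Sn n‖ ^ 2 + αn n * ‖ψ‖ ^ 2) :
    Tendsto (fun n => ‖ψn n - ψdag‖) atTop (𝓝 0) := by
  have hα n : 0 < αn n := (sq_nonneg _).trans_lt (hαn n)
  have hr n : ‖Tn n ψdag - Sn n‖ ≤ ηn n * ‖ψdag‖ + δn n :=
    norm_apply_sub_le_of_opNorm_sub_le (hTn n) (hSn n)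
  have hnorm n := norm_sq_le_of_tikhonov_le (hα n) (hψn_min n ψdag hψdag) (hr n)
  have hs := tendsto_sq_div_of_tendsto_div_sub ‖ψdag‖ hαn hrate
  have hresidual : Tendsto (fun n => ‖Tn n (ψn n) - Sn n‖) atTop (𝓝 0) :=
    tendsto_zero_of_sq_le (fun n => norm_nonneg _) (Eventually.of_forall fun n =>
        norm_apply_sub_sq_le_of_tikhonov_le (hα n).le (hψn_min n ψdag hψdag) (hr n))
      (by simpa using (((hη0.mul_const ‖ψdag‖).add hδ0).pow 2).add (hα0.mul_const (‖ψdag‖ ^ 2)))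
  have hT : Tendsto (fun n => T (ψn n)) atTop (𝓝 (T ψdag)) := by
    refine tendsto_iff_norm_sub_tendsto_zero.2 <| squeeze_zero (fun n => norm_nonneg _)
      (fun n => (norm_apply_sub_apply_le_of_opNorm_sub_le (hTn n) (hSn n) (ψn n)).trans ?_)
      (by simpa using ((hη0.mul (hs.const_add (‖ψdag‖ ^ 2)).sqrt).add hresidual).add hδ0)
    gcongr
    · exact (norm_nonneg _).trans (hTn n)
    · exact Real.le_sqrt_of_sq_le (hnorm n)
  refine tendsto_iff_norm_sub_tendsto_zero.1 <| tendsto_of_tendsto_apply_of_norm_sq_le hC_closed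
    hC_conv T (fun x hx => VariationalSourceCondition.eq_of_apply_eq_of_norm_le hvsc hβ hφ0 hx)
    (Eventually.of_forall hψn_mem) hT (Eventually.of_forall hnorm) ?_
  simpa using hs.const_add (‖ψdag‖ ^ 2)

/-- Convergence of constrained Tikhonov regularization with approximate operators:
under a variational source condition, if `δ_n, η_n, α_n → 0` with `α_n > η_n²` and
`(δ_n² + η_n²)/(α_n − η_n²) → 0`, the regularized minimizers converge to `ψ†`. -/
theorem stmt_3
    {X Y : Type*} [NormedAddCommGroup X] [InnerProductSpace ℝ X] [CompleteSpace X]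
    [NormedAddCommGroup Y] [InnerProductSpace ℝ Y] [CompleteSpace Y]
    (C : Set X) (hC_ne : C.Nonempty) (hC_closed : IsClosed C) (hC_conv : Convex ℝ C)
    (ψdag : X) (hψdag : ψdag ∈ C)
    (T : X →L[ℝ] Y)
    (β : ℝ) (hβ : 0 < β)
    (φ : ℝ → ℝ) (hφ_mono : StrictMonoOn φ (Set.Ici 0))
    (hφ_conc : ConcaveOn ℝ (Set.Ici 0) φ) (hφ0 : φ 0 = 0)
    (hφ_nonneg : ∀ t ≥ 0, 0 ≤ φ t)
    (hvsc : ∀ ψ ∈ C, β * ‖ψ - ψdag‖ ^ 2 ≤ ‖ψ‖ ^ 2 - ‖ψdag‖ ^ 2 + φ (‖T (ψ - ψdag)‖ ^ 2))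
    (Tn : ℕ → X →L[ℝ] Y) (ηn : ℕ → ℝ) (hTn : ∀ n, ‖T - Tn n‖ ≤ ηn n)
    (Sn : ℕ → Y) (δn : ℕ → ℝ) (hSn : ∀ n, ‖Sn n - T ψdag‖ ≤ δn n)
    (αn : ℕ → ℝ) (hαn : ∀ n, (ηn n) ^ 2 < αn n)
    (hδ0 : Tendsto δn atTop (𝓝 0)) (hη0 : Tendsto ηn atTop (𝓝 0))
    (hα0 : Tendsto αn atTop (𝓝 0))
    (hrate : Tendsto (fun n => ((δn n) ^ 2 + (ηn n) ^ 2) / (αn n - (ηn n) ^ 2)) atTop (𝓝 0))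
    (ψn : ℕ → X) (hψn_mem : ∀ n, ψn n ∈ C)
    (hψn_min : ∀ n, ∀ ψ ∈ C,
      ‖Tn n (ψn n) - Sn n‖ ^ 2 + αn n * ‖ψn n‖ ^ 2 ≤
        ‖Tn n ψ - Sn n‖ ^ 2 + αn n * ‖ψ‖ ^ 2) :
    Tendsto (fun n => ‖ψn n - ψdag‖) atTop (𝓝 0) :=
  stmt_3_general C hC_closed hC_conv ψdag hψdag T β hβ φ hφ0 hvsc Tn ηn hTn Sn δn hSn αn hαn hδ0 hη0
    hα0 hrate ψn hψn_mem hψn_min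
end

section
/- Let B be a real p×n matrix, G a real n×n matrix, H a real m×n matrix, y ∈ ℝ^p, and α, c > 0. For z ∈ ℝⁿ the following are equivalent: (i) there exist λ, w ∈ ℝ^m such that (BᵀB + αG)z − Hᵀλ = Bᵀy, cw + λ = 0, and λ = max(0, λ − c(Hz − w)) componentwise; (ii) (BᵀB + αG)z + c Hᵀ min(0, Hz) = Bᵀy, where min(0, ·) is taken componentwise. -/
open Matrix

lemma max_neg_mul_aux (c a : ℝ) (hc : 0 < c) : max 0 (-(c * a)) = -(c * min 0 a) := by
  rcases le_total a 0 with h | h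
  · rw [min_eq_right h, max_eq_right (by nlinarith)]
  · rw [min_eq_left h, max_eq_left (by nlinarith)]
    ring

/-- Equivalence of the first-order optimality system of the Moreau–Yosida relaxed
constrained deconvolution problem with a single semi-smooth equation. -/
theorem stmt_9 {p n m : ℕ}
    (B : Matrix (Fin p) (Fin n) ℝ) (G : Matrix (Fin n) (Fin n) ℝ)
    (H : Matrix (Fin m) (Fin n) ℝ) (y : Fin p → ℝ)
    (α c : ℝ) (hα : 0 < α) (hc : 0 < c) (z : Fin n → ℝ) :
    (∃ lam w : Fin m → ℝ,
        (Bᵀ * B + α • G).mulVec z - Hᵀ.mulVec lam = Bᵀ.mulVec y ∧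
        c • w + lam = 0 ∧
        lam = fun i => max 0 (lam i - c * (H.mulVec z i - w i))) ↔
      (Bᵀ * B + α • G).mulVec z + c • Hᵀ.mulVec (fun i => min 0 (H.mulVec z i)) =
        Bᵀ.mulVec y := by
  constructor
  · rintro ⟨lam, w, h1, h2, h3⟩
    have hlam : lam = fun i => -(c * min 0 (H.mulVec z i)) := by
      funext i
      have h2i : c * w i + lam i = 0 := by
        have := congrFun h2 i; simpa using this
      have h3i := congrFun h3 i
      have hinner : lam i - c * (H.mulVec z i - w i) = -(c * H.mulVec z i) := by
        nlinarith [h2i]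
      rw [h3i, hinner, max_neg_mul_aux c _ hc]
    have hmv : Hᵀ.mulVec lam = -(c • Hᵀ.mulVec (fun i => min 0 (H.mulVec z i))) := by
      rw [hlam]
      have : (fun i => -(c * min 0 (H.mulVec z i)))
          = -(c • fun i => min 0 (H.mulVec z i)) := by
        funext i; simp
      rw [this, Matrix.mulVec_neg, Matrix.mulVec_smul]
    rw [hmv, sub_neg_eq_add] at h1
    exact h1
  · intro h
    refine ⟨fun i => -(c * min 0 (H.mulVec z i)), fun i => min 0 (H.mulVec z i), ?_, ?_, ?_⟩
    · have hmv : Hᵀ.mulVec (fun i => -(c * min 0 (H.mulVec z i)))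
          = -(c • Hᵀ.mulVec (fun i => min 0 (H.mulVec z i))) := by
        have : (fun i => -(c * min 0 (H.mulVec z i)))
            = -(c • fun i => min 0 (H.mulVec z i)) := by
          funext i; simp
        rw [this, Matrix.mulVec_neg, Matrix.mulVec_smul]
      rw [hmv, sub_neg_eq_add]
      exact h
    · funext i; simp
    · funext i
      have hinner : -(c * min 0 (H.mulVec z i)) - c * (H.mulVec z i - min 0 (H.mulVec z i))
          = -(c * H.mulVec z i) := by ring
      rw [hinner, max_neg_mul_aux c _ hc]
end
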